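/- arXiv:2409.02939 — 2 statements merged into one kernel-verified Lean document; each statement's English description precedes it below -/
import Mathlib

section
/- Let (X,r) be a left nondegenerate idempotent quadratic set with X finite, and fix an element x₁ ∈ X. Then for all x, y ∈ X there exists a unique z ∈ X such that (x,y) and (x₁,z) lie in the same r-orbit (equivalently, such that [xy] = [x₁z] in the Yang–Baxter monoid S(X,r)); moreover z is the unique element of X satisfying x₁▷z = x▷y. -/
/-- The `r`-orbit equivalence on `X × X`: the equivalence relation generated by
relating `p` to `r p`. -/
def rOrbitRel {X : Type*} (r : X × X → X × X) : X × X → X × X → Prop :=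
  Relation.EqvGen (fun p q => r p = q)

/-- The defining relations of the Yang–Baxter monoid: `xy ~ x'y'` whenever
`r (x, y) = (x', y')`. -/
def ybRel {X : Type*} (r : X × X → X × X) : FreeMonoid X → FreeMonoid X → Prop :=
  fun a b => ∃ x y : X,
    a = FreeMonoid.of x * FreeMonoid.of y ∧
    b = FreeMonoid.of (r (x, y)).1 * FreeMonoid.of (r (x, y)).2

/-- The congruence on the free monoid on `X` generated by the Yang–Baxter relations;
the Yang–Baxter monoid `S(X, r)` is its quotient. -/
def ybCon {X : Type*} (r : X × X → X × X) : Con (FreeMonoid X) := conGen (ybRel r)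

/-!
For idempotent `r` two pairs lie in the same `r`-orbit exactly when they have the same
`r`-image, and left nondegeneracy makes an `r`-image `(a, b)` determined by `a`, since
`r (a, b) = (a, b)` and `b ↦ a ▷ b` is injective. Surjectivity of `z ↦ x₁ ▷ z` then gives
existence. The Yang–Baxter relations only relate two-letter words with the same `r`-image,
which is detected by an automaton that remembers the `r`-image of a word of length two.
-/

section Orbit

variable {X : Type*} {r : X × X → X × X}

theorem rOrbitRel_iff (hidem : r ∘ r = r) {p q : X × X} :
    rOrbitRel r p q ↔ r p = r q := by
  constructor
  · intro h
    induction h with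
    | rel a b hab => rw [← hab]; exact (congrFun hidem a).symm
    | refl => rfl
    | symm _ _ _ ih => exact ih.symm
    | trans _ _ _ _ _ ih₁ ih₂ => exact ih₁.trans ih₂
  · intro h
    have hq : rOrbitRel r q (r p) := h ▸ .rel _ _ rfl
    exact .trans _ _ _ (.rel _ _ rfl) (.symm _ _ hq)

theorem eq_of_fst_eq_of_injective (hinj : ∀ x : X, Function.Injective fun y => (r (x, y)).1)
    (hidem : r ∘ r = r) {p q : X × X} (h : (r p).1 = (r q).1) : r p = r q := by
  have hp : r (r p) = r p := congrFun hidem p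
  have hq : r (r q) = r q := congrFun hidem q
  refine Prod.ext h (hinj (r p).1 ?_)
  change (r ((r p).1, (r p).2)).1 = (r ((r p).1, (r q).2)).1
  rw [Prod.mk.eta, hp, h, Prod.mk.eta, hq]

end Orbit

section YangBaxterMonoid

/-- States of an automaton reading a word from right to left; `two p` records the `r`-image
`p` of a word of length two. -/
inductive ReadState (X : Type*)
  | nil
  | one (y : X)
  | two (p : X × X)
  | many

variable {X : Type*} (r : X × X → X × X)

def readLetter (x : X) : Function.End (ReadState X)
  | .nil => .one x
  | .one y => .two (r (x, y))
  | _ => .many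

def readWord : FreeMonoid X →* Function.End (ReadState X) := FreeMonoid.lift (readLetter r)

theorem readWord_of_mul_of_apply (x y : X) (s : ReadState X) :
    readWord r (FreeMonoid.of x * FreeMonoid.of y) s = readLetter r x (readLetter r y s) := rfl

variable {r}

theorem ybCon_le_ker_readWord (hidem : r ∘ r = r) : ybCon r ≤ Con.ker (readWord r) := by
  refine Con.conGen_le.mpr ?_
  rintro _ _ ⟨x, y, rfl, rfl⟩
  rw [Con.ker_rel]
  funext s
  rw [readWord_of_mul_of_apply, readWord_of_mul_of_apply]
  cases s <;> simp only [readLetter]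
  exact congrArg ReadState.two (congrFun hidem (x, y)).symm

theorem ybCon_of_of_iff (hidem : r ∘ r = r) {a b c d : X} :
    ybCon r (FreeMonoid.of a * FreeMonoid.of b) (FreeMonoid.of c * FreeMonoid.of d) ↔
      r (a, b) = r (c, d) := by
  constructor
  · intro h
    have hread := congrFun (ybCon_le_ker_readWord hidem h) .nil
    rw [readWord_of_mul_of_apply, readWord_of_mul_of_apply] at hread
    exact ReadState.two.inj hread
  · intro h
    have hab : ybCon r (FreeMonoid.of a * FreeMonoid.of b)
        (FreeMonoid.of (r (a, b)).1 * FreeMonoid.of (r (a, b)).2) :=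
      ConGen.Rel.of _ _ ⟨a, b, rfl, rfl⟩
    have hcd : ybCon r (FreeMonoid.of c * FreeMonoid.of d)
        (FreeMonoid.of (r (c, d)).1 * FreeMonoid.of (r (c, d)).2) :=
      ConGen.Rel.of _ _ ⟨c, d, rfl, rfl⟩
    rw [h] at hab
    exact (ybCon r).trans hab ((ybCon r).symm hcd)

end YangBaxterMonoid

theorem stmt5_general {X : Type*} (r : X × X → X × X)
    (hlnd : ∀ x : X, Function.Bijective fun y => (r (x, y)).1)
    (hidem : r ∘ r = r) (x₁ : X) :
    ∀ x y : X,
      (∃! z : X, rOrbitRel r (x, y) (x₁, z)) ∧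
      (∀ z : X, rOrbitRel r (x, y) (x₁, z) ↔
        ybCon r (FreeMonoid.of x * FreeMonoid.of y) (FreeMonoid.of x₁ * FreeMonoid.of z)) ∧
      (∀ z : X, rOrbitRel r (x, y) (x₁, z) ↔ (r (x₁, z)).1 = (r (x, y)).1) := by
  intro x y
  have orbit_iff_fst : ∀ z, rOrbitRel r (x, y) (x₁, z) ↔ (r (x₁, z)).1 = (r (x, y)).1 :=
    fun z => (rOrbitRel_iff hidem).trans
      ⟨fun h => congrArg Prod.fst h.symm,
        fun h => (eq_of_fst_eq_of_injective (fun x => (hlnd x).injective) hidem h).symm⟩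
  refine ⟨?_, fun z => by rw [rOrbitRel_iff hidem, ybCon_of_of_iff hidem], orbit_iff_fst⟩
  simpa only [orbit_iff_fst] using (hlnd x₁).existsUnique (r (x, y)).1

/-- Let `(X, r)` be a finite left nondegenerate idempotent quadratic set and `x₁ ∈ X`.
Then for all `x, y ∈ X` there is a unique `z ∈ X` with `(x, y)` and `(x₁, z)` in the same
`r`-orbit; lying in the same `r`-orbit is equivalent to the equality `[xy] = [x₁z]` in
the Yang–Baxter monoid `S(X, r)`, and also equivalent to `x₁ ▷ z = x ▷ y`. -/
theorem stmt5 {X : Type*} [Finite X] (r : X × X → X × X)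
    (hlnd : ∀ x : X, Function.Bijective fun y => (r (x, y)).1)
    (hidem : r ∘ r = r) (x₁ : X) :
    ∀ x y : X,
      (∃! z : X, rOrbitRel r (x, y) (x₁, z)) ∧
      (∀ z : X, rOrbitRel r (x, y) (x₁, z) ↔
        ybCon r (FreeMonoid.of x * FreeMonoid.of y) (FreeMonoid.of x₁ * FreeMonoid.of z)) ∧
      (∀ z : X, rOrbitRel r (x, y) (x₁, z) ↔ (r (x₁, z)).1 = (r (x, y)).1) :=
  stmt5_general r hlnd hidem x₁
end

section
/- Let X be a finite set with |X| ≥ 2, f : X → X a bijection, and k a field. Let A = k[S(X,r_f)] be the Yang–Baxter algebra of the permutation idempotent solution (X,r_f), and for each m ≥ 0 let A_m ⊆ A be the k-span of the classes [w] of words w of length m. Then the only k-linear map D : A → A satisfying D(ab) = D(a)b + aD(b) for all a, b ∈ A and D(A_m) ⊆ A_{m−1} for every m ≥ 1 (a derivation lowering the degree by 1) is the zero map. -/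
/-- The permutation idempotent solution `r_f (x, y) = (f y, y)` attached to a map
`f : X → X`. -/
def rPerm {X : Type*} (f : X → X) : X × X → X × X := fun p => (f p.2, p.2)

/-- The degree-`m` component of the Yang–Baxter algebra: the `k`-span of the classes of
words of length `m`. -/
noncomputable def degComp (k : Type*) [Field k] {X : Type*} (c : Con (FreeMonoid X)) (m : ℕ) :
    Submodule k (MonoidAlgebra k c.Quotient) :=
  Submodule.span k
    {a | ∃ w : FreeMonoid X, w.length = m ∧ a = MonoidAlgebra.of k c.Quotient (c.mk' w)}

/-!
A derivation of a monoid algebra vanishes as soon as it vanishes on a generating set of the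
monoid, so it suffices to show `D [x] = 0` for every letter `x`. Lowering the degree, `D` sends
`[x]` to a scalar `c x`, and applying `D` to the defining relation `[x][y] = [f y][y]` gives
`c x [y] + c y [x] = c (f y) [y] + c y [f y]`. Letters stay distinct in `S(X, r_f)` (the last
letter of a word is invariant), so comparing the coefficient of `[f y]` when `f y ≠ y`
(with `x = y`), or of `[x]` for some `x ≠ y` when `f y = y`, yields `c y = 0`.
-/

open Function MonoidAlgebra

theorem map_one_eq_zero_of_leibniz {A : Type*} [NonAssocRing A] {D : A → A}
    (hleib : ∀ a b, D (a * b) = D a * b + a * D b) : D 1 = 0 := by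
  simpa using hleib 1 1

namespace MonoidAlgebra

variable {k M : Type*}

theorem eq_zero_of_leibniz_of_closure_eq_top [CommRing k] [Monoid M] (D : k[M] →ₗ[k] k[M])
    (hleib : ∀ a b, D (a * b) = D a * b + a * D b) {s : Set M}
    (hs : Submonoid.closure s = ⊤) (hD : ∀ m ∈ s, D (of k M m) = 0) : D = 0 := by
  let kerOf : Submonoid M :=
    { carrier := {m | D (of k M m) = 0}
      one_mem' := by
        change D (of k M 1) = 0
        rw [map_one, map_one_eq_zero_of_leibniz hleib]
      mul_mem' := fun {a b} (ha : D (of k M a) = 0) (hb : D (of k M b) = 0) => by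
        change D (of k M (a * b)) = 0
        rw [map_mul, hleib, ha, hb, zero_mul, mul_zero, add_zero] }
  have hker : ∀ m, D (of k M m) = 0 := fun m =>
    (Submonoid.closure_le.2 hD : Submonoid.closure s ≤ kerOf) (hs ▸ Submonoid.mem_top m)
  exact lhom_ext' fun m => LinearMap.ext_ring (hker m)

theorem eq_zero_of_leibniz_of_perm_relations {X : Type*} [Nontrivial X] [CommSemiring k]
    [Monoid M] {e : X → M} (he : Injective e) {f : X → X}
    (hrel : ∀ x y, e x * e y = e (f y) * e y) {D : k[M] → k[M]}
    (hleib : ∀ a b, D (a * b) = D a * b + a * D b) {c : X → k}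
    (hc : ∀ x, D (of k M (e x)) = c x • 1) (y : X) : c y = 0 := by
  classical
  have key : ∀ x, c x • of k M (e y) + c y • of k M (e x)
      = c (f y) • of k M (e y) + c y • of k M (e (f y)) := fun x => by
    have h := congrArg D (congrArg (of k M) (hrel x y))
    rwa [map_mul, map_mul, hleib, hleib, hc, hc, hc, smul_one_mul, smul_one_mul, mul_smul_one,
      mul_smul_one] at h
  by_cases hfy : f y = y
  · obtain ⟨x, hx⟩ := exists_ne y
    have h := congrArg (fun a => a.coeff (e x)) (key x)
    simpa [hfy, coeff_smul, Finsupp.single_apply, he.eq_iff, hx] using h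
  · have h := congrArg (fun a => a.coeff (e (f y))) (key y)
    simpa [coeff_smul, Finsupp.single_apply, he.eq_iff, hfy, Ne.symm hfy] using h.symm

end MonoidAlgebra

section YangBaxter

variable {X : Type*}

theorem ybCon_closure_range_mk'_of (r : X × X → X × X) :
    Submonoid.closure (Set.range fun x => (ybCon r).mk' (FreeMonoid.of x)) = ⊤ :=
  PresentedMonoid.closure_range_of (ybRel r)

theorem ybCon_mk'_of_mul_of (r : X × X → X × X) (x y : X) :
    (ybCon r).mk' (.of x) * (ybCon r).mk' (.of y)
      = (ybCon r).mk' (.of (r (x, y)).1) * (ybCon r).mk' (.of (r (x, y)).2) := by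
  rw [← map_mul, ← map_mul]
  exact (Con.eq _).2 <| ConGen.Rel.of _ _ ⟨x, y, rfl, rfl⟩

-- The last letter of a word is read off in `(Function.End X)ᵐᵒᵖ`, where constant maps
-- multiply as `c_x * c_y = c_y`.
theorem ybCon_mk'_of_injective {r : X × X → X × X} (hr : ∀ p, (r p).2 = p.2) :
    Injective fun x => (ybCon r).mk' (FreeMonoid.of x) := by
  intro x y h
  let last : FreeMonoid X →* (Function.End X)ᵐᵒᵖ :=
    FreeMonoid.lift fun x => MulOpposite.op fun _ => x
  have hle : ybCon r ≤ Con.ker last := Con.conGen_le.2 <| by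
    rintro _ _ ⟨a, b, rfl, rfl⟩
    simp only [Con.ker_rel, map_mul, FreeMonoid.lift_eval_of, last, hr]
    rfl
  have hxy := hle ((Con.eq _).1 h)
  exact congrFun (congrArg MulOpposite.unop hxy) x

theorem degComp_zero (k : Type*) [Field k] (c : Con (FreeMonoid X)) :
    degComp k c 0 = Submodule.span k {1} := by
  rw [degComp]
  congr 1
  ext a
  constructor
  · rintro ⟨w, hw, rfl⟩
    rw [FreeMonoid.length_eq_zero.1 hw, map_one, map_one]
    exact Set.mem_singleton 1
  · rintro rfl
    exact ⟨1, rfl, by rw [map_one, map_one]⟩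

theorem of_mk'_of_mem_degComp_one (k : Type*) [Field k] (c : Con (FreeMonoid X)) (x : X) :
    of k c.Quotient (c.mk' (.of x)) ∈ degComp k c 1 :=
  Submodule.subset_span ⟨.of x, rfl, rfl⟩

end YangBaxter

theorem stmt11_general {X : Type*} (hX : 2 ≤ Nat.card X)
    (f : X → X)
    (k : Type*) [Field k]
    (D : MonoidAlgebra k (ybCon (rPerm f)).Quotient →ₗ[k]
         MonoidAlgebra k (ybCon (rPerm f)).Quotient)
    (hleib : ∀ a b, D (a * b) = D a * b + a * D b)
    (hdeg : ∀ m : ℕ, 1 ≤ m → ∀ a ∈ degComp k (ybCon (rPerm f)) m,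
      D a ∈ degComp k (ybCon (rPerm f)) (m - 1)) :
    D = 0 := by
  have : Finite X := Nat.finite_of_card_ne_zero (by omega)
  have : Nontrivial X := Finite.one_lt_card_iff_nontrivial.1 hX
  have hletter : ∀ x, ∃ a : k, D (of k _ ((ybCon (rPerm f)).mk' (.of x))) = a • 1 := fun x => by
    have h := hdeg 1 le_rfl _ (of_mk'_of_mem_degComp_one k _ x)
    rw [Nat.sub_self, degComp_zero, Submodule.mem_span_singleton] at h
    exact h.imp fun _ h => h.symm
  choose a ha using hletter
  refine eq_zero_of_leibniz_of_closure_eq_top D hleib (ybCon_closure_range_mk'_of _) ?_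
  rintro _ ⟨x, rfl⟩
  have hinj := ybCon_mk'_of_injective (r := rPerm f) fun _ => rfl
  rw [ha x, eq_zero_of_leibniz_of_perm_relations hinj (ybCon_mk'_of_mul_of _) hleib ha x,
    zero_smul]

/-- Let `X` be finite with `|X| ≥ 2`, `f : X → X` a bijection, and `k` a field. Then the
only `k`-linear map `D` on the Yang–Baxter algebra `A = k[S(X, r_f)]` satisfying the
Leibniz rule `D(ab) = D(a)b + aD(b)` and lowering the word-length degree by one is the
zero map. -/
theorem stmt11 {X : Type*} [Finite X] (hX : 2 ≤ Nat.card X)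
    (f : X → X) (hf : Function.Bijective f)
    (k : Type*) [Field k]
    (D : MonoidAlgebra k (ybCon (rPerm f)).Quotient →ₗ[k]
         MonoidAlgebra k (ybCon (rPerm f)).Quotient)
    (hleib : ∀ a b, D (a * b) = D a * b + a * D b)
    (hdeg : ∀ m : ℕ, 1 ≤ m → ∀ a ∈ degComp k (ybCon (rPerm f)) m,
      D a ∈ degComp k (ybCon (rPerm f)) (m - 1)) :
    D = 0 :=
  stmt11_general hX f k D hleib hdeg
end
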